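/- arXiv:2508.14372 — 4 statements merged into one kernel-verified Lean document; each statement's English description precedes it below -/
import Mathlib

section
/- Let G be a Dehn-Sommerville q-manifold with q odd. Then the Euler characteristic of G is zero, χ(G) = 0; consequently G is a Dehn-Sommerville q-sphere. -/
open Finset

/-- A finite abstract simplicial complex: a finite set of nonempty finite sets
closed under taking nonempty subsets. -/
def IsComplex {α : Type*} (G : Finset (Finset α)) : Prop :=
  ∀ x ∈ G, x ≠ ∅ ∧ ∀ y ⊆ x, y ≠ ∅ → y ∈ G

/-- The star U(x) = {y ∈ G : x ⊆ y}. -/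
def starOf {α : Type*} [DecidableEq α] (G : Finset (Finset α)) (x : Finset α) :
    Finset (Finset α) :=
  G.filter fun y => x ⊆ y

/-- The closed ball B(x): all (nonempty) simplices contained in some member of U(x). -/
def ballOf {α : Type*} [DecidableEq α] (G : Finset (Finset α)) (x : Finset α) :
    Finset (Finset α) :=
  G.filter fun z => ∃ y ∈ G, x ⊆ y ∧ z ⊆ y

/-- The unit sphere S(x) = B(x) \ U(x). -/
def sphereOf {α : Type*} [DecidableEq α] (G : Finset (Finset α)) (x : Finset α) :
    Finset (Finset α) :=
  ballOf G x \ starOf G x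

/-- Maximal dimension of a complex; the empty complex has dimension -1. -/
def dimC {α : Type*} (G : Finset (Finset α)) : ℤ := ((G.sup Finset.card : ℕ) : ℤ) - 1

/-- Euler characteristic χ(A) = Σ_{x∈A} (−1)^{|x|−1}. -/
def chi {α : Type*} (A : Finset (Finset α)) : ℤ := ∑ x ∈ A, (-1 : ℤ) ^ (x.card - 1)

/-- The set of vertices of a complex (elements occurring in some simplex). -/
def vertexSet {α : Type*} [DecidableEq α] (G : Finset (Finset α)) : Finset α := G.sup id

/-- Dehn-Sommerville spheres, defined inductively: the empty complex is the
Dehn-Sommerville (−1)-sphere, and a complex of maximal dimension q ≥ 0 is a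
Dehn-Sommerville q-sphere if all unit spheres are Dehn-Sommerville (q−1)-spheres
and χ(G) = 1 + (−1)^q. -/
inductive IsDSSphere {α : Type*} [DecidableEq α] : ℤ → Finset (Finset α) → Prop
  | empty : IsDSSphere (-1) (∅ : Finset (Finset α))
  | step (q : ℕ) (G : Finset (Finset α)) (hC : IsComplex G) (hq : dimC G = q)
      (hS : ∀ x ∈ G, IsDSSphere ((q : ℤ) - 1) (sphereOf G x))
      (hχ : chi G = 1 + (-1) ^ q) : IsDSSphere q G

/-- A Dehn-Sommerville q-manifold: a complex of maximal dimension q all of whose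
unit spheres are Dehn-Sommerville (q−1)-spheres. -/
def IsDSManifold {α : Type*} [DecidableEq α] (q : ℤ) (G : Finset (Finset α)) : Prop :=
  IsComplex G ∧ dimC G = q ∧ ∀ x ∈ G, IsDSSphere (q - 1) (sphereOf G x)

/-!
The closed ball `B(x)` and the closure of a simplex `y` are cones over any vertex of `x`
(resp. `y`), so both have Euler characteristic `1`. As `q - 1` is even, every unit sphere has
`χ(S(x)) = 2`, hence the star has `χ(U(x)) = χ(B(x)) - χ(S(x)) = -1`. Counting the pairs
`x ⊆ y` with weight `ω(x) ω(y)`, where `ω(x) = (-1)^dim x`, gives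
`∑ₓ ω(x) χ(U(x)) = ∑_y ω(y) χ(closure of y) = χ(G)`, that is `-χ(G) = χ(G)`.
-/

section

variable {α : Type*} [DecidableEq α]

lemma neg_one_pow_card_insert_sub_one {v : α} {z : Finset α} (hz : z.Nonempty) (hv : v ∉ z) :
    (-1 : ℤ) ^ ((insert v z).card - 1) = -(-1) ^ (z.card - 1) := by
  rw [card_insert_of_notMem hv, Nat.add_sub_cancel, ← Nat.sub_add_cancel hz.card_pos, pow_succ,
    Nat.add_sub_cancel]
  ring

lemma starOf_subset_ballOf (G : Finset (Finset α)) (x : Finset α) : starOf G x ⊆ ballOf G x :=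
  fun y hy => mem_filter.2 ⟨(mem_filter.1 hy).1, y, (mem_filter.1 hy).1, (mem_filter.1 hy).2,
    subset_rfl⟩

lemma chi_sphereOf (G : Finset (Finset α)) (x : Finset α) :
    chi (sphereOf G x) = chi (ballOf G x) - chi (starOf G x) :=
  sum_sdiff_eq_sub (starOf_subset_ballOf G x)

end

namespace IsComplex

variable {α : Type*} {G : Finset (Finset α)}

lemma nonempty (hG : IsComplex G) {z : Finset α} (hz : z ∈ G) : z.Nonempty :=
  nonempty_iff_ne_empty.2 (hG z hz).1

lemma filter (hG : IsComplex G) {P : Finset α → Prop} [DecidablePred P]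
    (hP : ∀ y z, z ⊆ y → P y → P z) : IsComplex (G.filter P) := by
  intro z hz
  rw [mem_filter] at hz
  exact ⟨(hG z hz.1).1, fun y hyz hy => mem_filter.2 ⟨(hG z hz.1).2 y hyz hy, hP z y hyz hz.2⟩⟩

variable [DecidableEq α]

lemma chi_eq_one_of_cone {K : Finset (Finset α)} (hK : IsComplex K) {v : α} (hv : {v} ∈ K)
    (hcone : ∀ z ∈ K, insert v z ∈ K) : chi K = 1 := by
  have hmem : ∀ z ∈ K.erase {v}, z ∈ K ∧ z.Nonempty ∧ z ≠ {v} := fun z hz =>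
    ⟨mem_of_mem_erase hz, hK.nonempty (mem_of_mem_erase hz), ne_of_mem_erase hz⟩
  have herase : ∀ z ∈ K.erase {v}, v ∈ z → (z.erase v).Nonempty := fun z hz hvz => by
    obtain ⟨-, -, hzv⟩ := hmem z hz
    exact (erase_nonempty hvz).2 ((nontrivial_iff_ne_singleton hvz).2 hzv)
  -- toggling `v` is a sign-reversing involution on the simplices other than `{v}`
  have hsum : ∑ z ∈ K.erase {v}, (-1 : ℤ) ^ (z.card - 1) = 0 := by
    refine sum_involution (fun z _ => if v ∈ z then z.erase v else insert v z) ?_ ?_ ?_ ?_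
    · intro z hz
      split_ifs with hvz
      · have h := neg_one_pow_card_insert_sub_one (herase z hz hvz) (notMem_erase v z)
        rw [insert_erase hvz] at h
        rw [h, neg_add_cancel]
      · rw [neg_one_pow_card_insert_sub_one (hmem z hz).2.1 hvz, add_neg_cancel]
    · intro z _ _
      split_ifs with hvz
      · exact fun h => notMem_erase v z (by rw [h]; exact hvz)
      · exact fun h => hvz (h ▸ mem_insert_self v z)
    · intro z hz
      obtain ⟨hzK, ⟨w, hw⟩, -⟩ := hmem z hz
      split_ifs with hvz
      · refine mem_erase.2 ⟨fun h => notMem_erase v z ?_, ?_⟩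
        · rw [h]; exact mem_singleton_self v
        · exact (hK z hzK).2 _ (erase_subset v z) (herase z hz hvz).ne_empty
      · refine mem_erase.2 ⟨fun h => hvz ?_, hcone z hzK⟩
        have hwv : w = v := mem_singleton.1 (h ▸ mem_insert_of_mem hw)
        exact hwv ▸ hw
    · intro z _
      by_cases hvz : v ∈ z <;> simp [hvz]
  rw [chi, ← add_sum_erase K _ hv, hsum, card_singleton]
  rfl

lemma chi_filter_subset (hG : IsComplex G) {y : Finset α} (hy : y ∈ G) :
    chi (G.filter (· ⊆ y)) = 1 := by
  obtain ⟨v, hv⟩ := hG.nonempty hy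
  have hK : IsComplex (G.filter (· ⊆ y)) := hG.filter fun _ _ hzy hy => hzy.trans hy
  refine hK.chi_eq_one_of_cone (v := v) ?_ fun z hz => ?_
  · exact mem_filter.2 ⟨(hG y hy).2 _ (singleton_subset_iff.2 hv) (singleton_ne_empty v),
      singleton_subset_iff.2 hv⟩
  · have hzy : insert v z ⊆ y := insert_subset hv (mem_filter.1 hz).2
    exact mem_filter.2 ⟨(hG y hy).2 _ hzy (insert_ne_empty v z), hzy⟩

lemma chi_ballOf (hG : IsComplex G) {x : Finset α} (hx : x ∈ G) : chi (ballOf G x) = 1 := by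
  obtain ⟨v, hv⟩ := hG.nonempty hx
  have hB : IsComplex (ballOf G x) :=
    hG.filter fun _ _ hzy ⟨y, hy, hxy, hy'⟩ => ⟨y, hy, hxy, hzy.trans hy'⟩
  refine hB.chi_eq_one_of_cone (v := v) ?_ fun z hz => ?_
  · exact mem_filter.2 ⟨(hG x hx).2 _ (singleton_subset_iff.2 hv) (singleton_ne_empty v),
      x, hx, subset_rfl, singleton_subset_iff.2 hv⟩
  · obtain ⟨-, y, hy, hxy, hzy⟩ := mem_filter.1 hz
    have hvzy : insert v z ⊆ y := insert_subset (hxy hv) hzy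
    exact mem_filter.2 ⟨(hG y hy).2 _ hvzy (insert_ne_empty v z), y, hy, hxy, hvzy⟩

lemma sum_mul_chi_starOf (hG : IsComplex G) :
    ∑ x ∈ G, (-1 : ℤ) ^ (x.card - 1) * chi (starOf G x) = chi G := by
  calc ∑ x ∈ G, (-1 : ℤ) ^ (x.card - 1) * chi (starOf G x)
      = ∑ y ∈ G, ∑ x ∈ G, if x ⊆ y then (-1 : ℤ) ^ (x.card - 1) * (-1) ^ (y.card - 1) else 0 := by
        simp only [chi, starOf, mul_sum, sum_filter, mul_ite, mul_zero]
        exact sum_comm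
    _ = ∑ y ∈ G, chi (G.filter (· ⊆ y)) * (-1) ^ (y.card - 1) := by
        simp only [chi, sum_mul, sum_filter, ite_mul, zero_mul]
    _ = chi G := by
        rw [chi]
        exact sum_congr rfl fun y hy => by rw [hG.chi_filter_subset hy, one_mul]

lemma chi_eq_zero_of_chi_sphereOf_eq_two (hG : IsComplex G)
    (hS : ∀ x ∈ G, chi (sphereOf G x) = 2) : chi G = 0 := by
  have hstar : ∀ x ∈ G, chi (starOf G x) = -1 := fun x hx => by
    linarith [chi_sphereOf G x, hG.chi_ballOf hx, hS x hx]
  have h := hG.sum_mul_chi_starOf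
  rw [sum_congr rfl fun x hx => by rw [hstar x hx, mul_neg_one], sum_neg_distrib] at h
  rw [chi] at h ⊢
  linarith

end IsComplex

lemma IsDSSphere.chi_eq {α : Type*} [DecidableEq α] {r : ℤ} {S : Finset (Finset α)}
    (hS : IsDSSphere r S) : chi S = 1 + r.negOnePow := by
  cases hS with
  | empty => rfl
  | step q _ _ _ _ hχ => rw [hχ, Int.coe_negOnePow_natCast]

lemma IsDSManifold.isDSSphere {α : Type*} [DecidableEq α] {q : ℤ} {G : Finset (Finset α)}
    (hG : IsDSManifold q G) (hχ : chi G = 1 + q.negOnePow) : IsDSSphere q G := by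
  obtain ⟨hC, hdim, hS⟩ := hG
  rcases G.eq_empty_or_nonempty with rfl | ⟨x, hx⟩
  · obtain rfl : q = -1 := by simpa [dimC] using hdim.symm
    exact IsDSSphere.empty
  · have hq : 0 ≤ q := by
      have := le_sup (f := Finset.card) hx
      have := (hC.nonempty hx).card_pos
      rw [← hdim, dimC]
      omega
    lift q to ℕ using hq
    exact IsDSSphere.step q G hC hdim hS (by rw [hχ, Int.coe_negOnePow_natCast])

/-- An odd-dimensional Dehn-Sommerville q-manifold has zero Euler
characteristic, and is consequently a Dehn-Sommerville q-sphere. -/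
theorem odd_DSManifold_chi_zero_and_sphere {α : Type*} [DecidableEq α]
    (q : ℤ) (G : Finset (Finset α)) (hq : Odd q) (hG : IsDSManifold q G) :
    chi G = 0 ∧ IsDSSphere q G := by
  have hχ : chi G = 0 := hG.1.chi_eq_zero_of_chi_sphereOf_eq_two fun x hx => by
    rw [(hG.2.2 x hx).chi_eq, Int.negOnePow_even _ (hq.sub_odd odd_one)]
    rfl
  refine ⟨hχ, hG.isDSSphere ?_⟩
  rw [hχ, Int.negOnePow_odd q hq]
  rfl
end

section
/- Let G be a Dehn-Sommerville q-variety, let k ≥ 1 be an integer, and let g : V(G) → {0,…,k} be an arbitrary function on the vertices of G. If the level set G_g = {x ∈ G : g(x) = {0,…,k}} is nonempty, then G_g is a Dehn-Sommerville (q−k)-variety, i.e., the Whitney complex of the comparability graph of G_g is a Dehn-Sommerville (q−k)-variety. -/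
open Finset

/-- Dehn-Sommerville varieties, defined inductively: the empty complex is the
Dehn-Sommerville (−1)-variety, and a complex of maximal dimension q ≥ 0 is a
Dehn-Sommerville q-variety if all unit spheres are Dehn-Sommerville
(q−1)-varieties. -/
inductive IsDSVariety {α : Type*} [DecidableEq α] : ℤ → Finset (Finset α) → Prop
  | empty : IsDSVariety (-1) (∅ : Finset (Finset α))
  | step (q : ℕ) (G : Finset (Finset α)) (hC : IsComplex G) (hq : dimC G = q)
      (hS : ∀ x ∈ G, IsDSVariety ((q : ℤ) - 1) (sphereOf G x)) : IsDSVariety q G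

/-- The Whitney complex of the comparability graph of a set W of simplices:
its simplices are the nonempty subsets of W that are pairwise comparable
under inclusion. -/
def chainComplex {α : Type*} [DecidableEq α] (W : Finset (Finset α)) :
    Finset (Finset (Finset α)) :=
  W.powerset.filter fun c => c ≠ ∅ ∧ ∀ x ∈ c, ∀ y ∈ c, x ⊆ y ∨ y ⊆ x

/-- The level set G_g = {x ∈ G : g(x) = {0,…,k}}, where g is extended to
simplices by g(x) = {g(v) : v vertex of x}. -/
def levelSet {α : Type*} [DecidableEq α] (G : Finset (Finset α)) (k : ℕ)
    (g : α → Fin (k + 1)) : Finset (Finset α) :=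
  G.filter fun x => x.image g = Finset.univ

/-!
Every unit sphere is the join of the boundary of its centre with its link, so a complex is a
Dehn-Sommerville `q`-variety as soon as its link at each simplex `x` is a `(q - |x|)`-variety, and
conversely. Boundaries of simplices and joins of varieties are varieties, by a simultaneous
induction on dimension.

Let `x` be the least element of a chain `c` of the level set. A chain extending `c` consists of
faces strictly below `x`, which form the level set of the boundary of `x`, and of faces strictly
above `x` extending `c \ {x}`. Hence the link of `c` is the join of the chain complex of the level
set of the boundary of `x` with the link of `c \ {x}` in the chain complex of the star of `x`; the
star of `x` is order-isomorphic to the link of `x` via `z ↦ z ∪ x`, and the chain complex of the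
link of `x` is the level set for `k = 0`. Both pieces have smaller dimension, so induction on `q`
applies, with `(|x| - 2 - k) + (q - |x| - (|c| - 1)) + 1 = q - k - |c|`.
-/

section Complex

variable {α : Type*}

theorem IsComplex.ne_empty {G : Finset (Finset α)} (hG : IsComplex G) {x : Finset α}
    (hx : x ∈ G) : x ≠ ∅ :=
  (hG x hx).1

theorem IsComplex.mem_of_subset {G : Finset (Finset α)} (hG : IsComplex G) {x y : Finset α}
    (hx : x ∈ G) (hyx : y ⊆ x) (hy : y ≠ ∅) : y ∈ G :=
  (hG x hx).2 y hyx hy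

theorem IsComplex.empty_notMem {G : Finset (Finset α)} (hG : IsComplex G) : ∅ ∉ G :=
  fun h => hG.ne_empty h rfl

variable [DecidableEq α]

theorem IsComplex.mem_insert_empty_of_subset {G : Finset (Finset α)} (hG : IsComplex G)
    {x y : Finset α} (hx : x ∈ insert ∅ G) (hyx : y ⊆ x) : y ∈ insert ∅ G := by
  rcases eq_or_ne y ∅ with rfl | hy
  · exact mem_insert_self _ _
  rcases mem_insert.1 hx with rfl | hx
  · exact absurd (subset_empty.1 hyx) hy
  · exact mem_insert_of_mem (hG.mem_of_subset hx hyx hy)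

theorem IsComplex.mem_sphereOf {G : Finset (Finset α)} (hG : IsComplex G) {x z : Finset α} :
    z ∈ sphereOf G x ↔ z ∈ G ∧ z ∪ x ∈ G ∧ ¬x ⊆ z := by
  simp only [sphereOf, ballOf, starOf, mem_sdiff, mem_filter]
  constructor
  · rintro ⟨⟨hz, y, hy, hxy, hzy⟩, hzx⟩
    exact ⟨hz, hG.mem_of_subset hy (union_subset hzy hxy)
      (fun h => hG.ne_empty hz (union_eq_empty.1 h).1),
      fun h => hzx ⟨hz, h⟩⟩
  · rintro ⟨hz, hzx, hxz⟩
    exact ⟨⟨hz, z ∪ x, hzx, subset_union_right, subset_union_left⟩, fun h => hxz h.2⟩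

end Complex

section Constructions

variable {α : Type*} [DecidableEq α]

def simplexBoundary (x : Finset α) : Finset (Finset α) :=
  x.ssubsets.erase ∅

def link (G : Finset (Finset α)) (x : Finset α) : Finset (Finset α) :=
  G.filter fun z => Disjoint z x ∧ z ∪ x ∈ G

/-- The empty face is adjoined to both factors, so that `A` and `B` are subcomplexes of the join. -/
def join (A B : Finset (Finset α)) : Finset (Finset α) :=
  (image₂ (· ∪ ·) (insert ∅ A) (insert ∅ B)).erase ∅

theorem mem_simplexBoundary {x y : Finset α} : y ∈ simplexBoundary x ↔ y ≠ ∅ ∧ y ⊂ x := by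
  simp [simplexBoundary]

theorem mem_insert_empty_simplexBoundary {x y : Finset α} :
    y ∈ insert ∅ (simplexBoundary x) ↔ y = ∅ ∨ y ⊂ x := by
  rw [mem_insert, mem_simplexBoundary]
  tauto

theorem isComplex_simplexBoundary (x : Finset α) : IsComplex (simplexBoundary x) := by
  intro y hy
  rw [mem_simplexBoundary] at hy
  exact ⟨hy.1, fun z hzy hz => mem_simplexBoundary.2 ⟨hz, lt_of_le_of_lt hzy hy.2⟩⟩

theorem sup_card_simplexBoundary (x : Finset α) :
    (simplexBoundary x).sup card = x.card - 1 := by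
  refine le_antisymm (Finset.sup_le fun y hy => ?_) ?_
  · have := card_lt_card (mem_simplexBoundary.1 hy).2
    omega
  · rcases le_or_gt x.card 1 with hx | hx
    · omega
    obtain ⟨v, hv⟩ := card_pos.1 (by omega : 0 < x.card)
    have hmem : x.erase v ∈ simplexBoundary x :=
      mem_simplexBoundary.2 ⟨fun h => by
        have := card_erase_of_mem hv; rw [h, card_empty] at this; omega,
        erase_ssubset hv⟩
    simpa [card_erase_of_mem hv] using le_sup (f := card) hmem

theorem link_simplexBoundary {x y : Finset α} (hy : y ∈ simplexBoundary x) :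
    link (simplexBoundary x) y = simplexBoundary (x \ y) := by
  have hyx := (mem_simplexBoundary.1 hy).2.subset
  ext z
  simp only [link, mem_filter, mem_simplexBoundary, subset_sdiff, ssubset_iff_subset_ne]
  constructor
  · rintro ⟨⟨hz, hzx, -⟩, hzy, -, hzyx, hne⟩
    refine ⟨hz, ⟨hzx, hzy⟩, fun h => hne ?_⟩
    rw [h, sdiff_union_of_subset hyx]
  · rintro ⟨hz, ⟨hzx, hzy⟩, hne⟩
    refine ⟨⟨hz, hzx, fun h => ?_⟩, hzy, ?_, union_subset hzx hyx, fun h => hne ?_⟩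
    · exact (mem_simplexBoundary.1 hy).1 ((disjoint_self_iff_empty _).1 ((h ▸ hzy).mono_left hyx))
    · exact fun h => hz (union_eq_empty.1 h).1
    · rw [← h, union_sdiff_right, sdiff_eq_self_of_disjoint hzy]

theorem mem_link {G : Finset (Finset α)} {x z : Finset α} :
    z ∈ link G x ↔ z ∈ G ∧ Disjoint z x ∧ z ∪ x ∈ G := by
  simp [link]

theorem mem_insert_empty_link {G : Finset (Finset α)} {x z : Finset α} (hx : x ∈ insert ∅ G) :
    z ∈ insert ∅ (link G x) ↔ z ∈ insert ∅ G ∧ Disjoint z x ∧ z ∪ x ∈ insert ∅ G := by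
  rcases eq_or_ne z ∅ with rfl | hz
  · simpa using hx
  have hzx : z ∪ x ≠ ∅ := fun h => hz (union_eq_empty.1 h).1
  simp [mem_link, hz, hzx]

theorem link_empty (G : Finset (Finset α)) : link G ∅ = G := by
  ext z
  simp [mem_link]

theorem mem_join {A B : Finset (Finset α)} {z : Finset α} :
    z ∈ join A B ↔ z ≠ ∅ ∧ ∃ a ∈ insert ∅ A, ∃ b ∈ insert ∅ B, a ∪ b = z := by
  rw [join, mem_erase, mem_image₂]

theorem mem_join_of_separated {A B : Finset (Finset α)} {s : Finset α}
    (hA : ∀ a ∈ A, a ⊆ s) (hB : ∀ b ∈ B, Disjoint b s) {z : Finset α} :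
    z ∈ join A B ↔ z ≠ ∅ ∧ z ∩ s ∈ insert ∅ A ∧ z \ s ∈ insert ∅ B := by
  rw [mem_join]
  refine and_congr_right fun _ =>
    ⟨?_, fun h => ⟨_, h.1, _, h.2, by rw [union_comm, sdiff_union_inter]⟩⟩
  rintro ⟨a, ha, b, hb, rfl⟩
  have has : a ⊆ s := by rcases mem_insert.1 ha with rfl | ha <;> simp [*]
  have hbs : Disjoint b s := by rcases mem_insert.1 hb with rfl | hb <;> simp [*]
  rw [union_inter_distrib_right, inter_eq_left.2 has, disjoint_iff_inter_eq_empty.1 hbs,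
    union_empty, union_sdiff_distrib, sdiff_eq_empty_iff_subset.2 has,
    sdiff_eq_self_of_disjoint hbs, empty_union]
  exact ⟨ha, hb⟩

theorem isComplex_join {A B : Finset (Finset α)} (hA : IsComplex A) (hB : IsComplex B) :
    IsComplex (join A B) := by
  intro z hz
  obtain ⟨hz0, a, ha, b, hb, rfl⟩ := mem_join.1 hz
  refine ⟨hz0, fun y hy hy0 => mem_join.2 ⟨hy0, y ∩ a,
    hA.mem_insert_empty_of_subset ha inter_subset_right, y ∩ b,
    hB.mem_insert_empty_of_subset hb inter_subset_right, ?_⟩⟩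
  rw [← inter_union_distrib_left, inter_eq_left.2 hy]

theorem join_empty_left {B : Finset (Finset α)} (hB : ∅ ∉ B) : join ∅ B = B := by
  ext z
  rw [mem_join]
  constructor
  · rintro ⟨hz, a, ha, b, hb, rfl⟩
    obtain rfl : a = ∅ := by simpa using ha
    rcases mem_insert.1 hb with rfl | hb
    · exact absurd (empty_union _) hz
    · rwa [empty_union]
  · intro hz
    exact ⟨fun h => hB (h ▸ hz), ∅, mem_insert_self _ _, z, mem_insert_of_mem hz, empty_union z⟩

theorem join_comm (A B : Finset (Finset α)) : join A B = join B A := by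
  simp only [join, image₂_swap (· ∪ ·) (insert ∅ A), union_comm]

theorem join_empty_right {A : Finset (Finset α)} (hA : ∅ ∉ A) : join A ∅ = A := by
  rw [join_comm, join_empty_left hA]

theorem link_join {A B : Finset (Finset α)} {s c : Finset α} (hA : ∀ a ∈ A, a ⊆ s)
    (hB : ∀ b ∈ B, Disjoint b s) (hc : c ∈ join A B) :
    link (join A B) c = join (link A (c ∩ s)) (link B (c \ s)) := by
  obtain ⟨-, hcA, hcB⟩ := (mem_join_of_separated hA hB).1 hc
  have hA' : ∀ a ∈ link A (c ∩ s), a ⊆ s := fun a ha => hA a (mem_link.1 ha).1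
  have hB' : ∀ b ∈ link B (c \ s), Disjoint b s := fun b hb => hB b (mem_link.1 hb).1
  have hdisj : ∀ z : Finset α,
      Disjoint z c ↔ Disjoint (z ∩ s) (c ∩ s) ∧ Disjoint (z \ s) (c \ s) := by
    intro z
    simp only [disjoint_left, mem_inter, mem_sdiff]
    exact ⟨fun h => ⟨fun a ha hc => h ha.1 hc.1, fun a ha hc => h ha.1 hc.1⟩,
      fun h a ha hc => (em (a ∈ s)).elim (fun hs => h.1 ⟨ha, hs⟩ ⟨hc, hs⟩)
        fun hs => h.2 ⟨ha, hs⟩ ⟨hc, hs⟩⟩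
  ext z
  rw [mem_link, mem_join_of_separated hA hB, mem_join_of_separated hA hB,
    mem_join_of_separated hA' hB', mem_insert_empty_link hcA, mem_insert_empty_link hcB,
    hdisj, union_inter_distrib_right, union_sdiff_distrib]
  have : z ≠ ∅ → z ∪ c ≠ ∅ := fun hz h => hz (union_eq_empty.1 h).1
  tauto

theorem sphereOf_eq_join {G : Finset (Finset α)} (hG : IsComplex G) {x : Finset α}
    (hx : x ∈ G) : sphereOf G x = join (simplexBoundary x) (link G x) := by
  have hA : ∀ a ∈ simplexBoundary x, a ⊆ x := fun a ha => (mem_simplexBoundary.1 ha).2.subset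
  have hB : ∀ b ∈ link G x, Disjoint b x := fun b hb => (mem_link.1 hb).2.1
  ext z
  rw [hG.mem_sphereOf, mem_join_of_separated hA hB, mem_insert_empty_simplexBoundary,
    mem_insert_empty_link (mem_insert_of_mem hx), sdiff_union_self_eq_union]
  have hface : z ∩ x = ∅ ∨ z ∩ x ⊂ x ↔ ¬x ⊆ z := by
    rw [← inter_eq_right, ssubset_iff_subset_ne, and_iff_right inter_subset_right]
    exact ⟨by rintro (h | h) h' <;> simp_all [hG.ne_empty hx], Or.inr⟩
  rw [hface]
  constructor
  · rintro ⟨hz, hzx, hxz⟩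
    exact ⟨hG.ne_empty hz, hxz, hG.mem_insert_empty_of_subset (mem_insert_of_mem hz) sdiff_subset,
      sdiff_disjoint, mem_insert_of_mem hzx⟩
  · rintro ⟨hz, hxz, -, -, hzx⟩
    have hzx : z ∪ x ∈ G := (mem_insert.1 hzx).resolve_left fun h => hz (union_eq_empty.1 h).1
    exact ⟨hG.mem_of_subset hzx subset_union_left hz, hzx, hxz⟩

end Constructions

section Links

variable {α : Type*} [DecidableEq α]

theorem link_link {G : Finset (Finset α)} (hG : IsComplex G) {x y : Finset α}
    (hxy : Disjoint x y) : link (link G x) y = link G (x ∪ y) := by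
  ext z
  simp only [mem_link, disjoint_union_left, disjoint_union_right]
  constructor
  · rintro ⟨⟨hz, hzx, -⟩, hzy, -, -, hzyx⟩
    exact ⟨hz, ⟨hzx, hzy⟩, by rwa [union_right_comm, union_assoc] at hzyx⟩
  · rintro ⟨hz, ⟨hzx, hzy⟩, hzxy⟩
    have hz0 := hG.ne_empty hz
    have hne : ∀ t, z ∪ t ≠ ∅ := fun t h => hz0 (union_eq_empty.1 h).1
    exact ⟨⟨hz, hzx, hG.mem_of_subset hzxy (union_subset_union_right subset_union_left) (hne _)⟩,
      hzy, hG.mem_of_subset hzxy (union_subset_union_right subset_union_right) (hne _),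
      ⟨hzx, hxy.symm⟩, by rwa [union_right_comm, union_assoc]⟩

theorem link_singleton {G : Finset (Finset α)} (hG : IsComplex G) (v : α) :
    link G {v} = sphereOf G {v} := by
  ext z
  rw [mem_link, hG.mem_sphereOf, disjoint_singleton_right, singleton_subset_iff]
  tauto

end Links

section Varieties

variable {α : Type*} [DecidableEq α] {q : ℤ} {G : Finset (Finset α)}

theorem IsDSVariety.isComplex (hG : IsDSVariety q G) : IsComplex G := by
  cases hG with
  | empty => intro x hx; simp at hx
  | step _ _ hC => exact hC

theorem IsDSVariety.sup_card (hG : IsDSVariety q G) : ((G.sup card : ℕ) : ℤ) = q + 1 := by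
  cases hG with
  | empty => simp
  | step _ _ _ hq => rw [dimC] at hq; omega

theorem IsDSVariety.card_le (hG : IsDSVariety q G) {x : Finset α} (hx : x ∈ insert ∅ G) :
    (x.card : ℤ) ≤ q + 1 := by
  rw [← hG.sup_card]
  rcases mem_insert.1 hx with rfl | hx
  · simp
  · exact_mod_cast le_sup (f := card) hx

theorem IsDSVariety.eq_neg_one (hG : IsDSVariety q (∅ : Finset (Finset α))) : q = -1 := by
  have := hG.sup_card
  simp at this
  omega

theorem IsDSVariety.nonneg (hG : IsDSVariety q G) (hne : G ≠ ∅) : 0 ≤ q := by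
  obtain ⟨x, hx⟩ := nonempty_iff_ne_empty.2 hne
  have := hG.card_le (mem_insert_of_mem hx)
  have := card_pos.2 (nonempty_iff_ne_empty.2 (hG.isComplex.ne_empty hx))
  omega

theorem isDSVariety_sphereOf (hG : IsDSVariety q G) {x : Finset α} (hx : x ∈ G) :
    IsDSVariety (q - 1) (sphereOf G x) := by
  cases hG with
  | empty => simp at hx
  | step _ _ _ _ hS => exact hS x hx

theorem isDSVariety_link (hG : IsDSVariety q G) {x : Finset α} (hx : x ∈ insert ∅ G) :
    IsDSVariety (q - x.card) (link G x) := by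
  induction x using Finset.induction_on generalizing q G with
  | empty => simpa [link_empty] using hG
  | insert v x hvx ih =>
    have hC := hG.isComplex
    have hxG : insert v x ∈ G := (mem_insert.1 hx).resolve_left (insert_ne_empty v x)
    have hv : {v} ∈ G :=
      hC.mem_of_subset hxG (singleton_subset_iff.2 (mem_insert_self v x)) (singleton_ne_empty v)
    have hx' : x ∈ insert ∅ (sphereOf G {v}) := by
      rcases eq_or_ne x ∅ with rfl | hx0
      · exact mem_insert_self _ _
      refine mem_insert_of_mem (hC.mem_sphereOf.2 ⟨hC.mem_of_subset hxG (subset_insert v x) hx0,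
        by rwa [union_comm, ← insert_eq], by simpa using hvx⟩)
    have := ih (isDSVariety_sphereOf hG hv) hx'
    rw [← link_singleton hC, link_link hC (disjoint_singleton_left.2 hvx), ← insert_eq] at this
    rw [card_insert_of_notMem hvx]
    convert this using 1
    push_cast
    ring

theorem IsDSVariety.of_sphereOf (hC : IsComplex G) (hne : G ≠ ∅)
    (hS : ∀ x ∈ G, IsDSVariety (q - 1) (sphereOf G x)) : IsDSVariety q G := by
  obtain ⟨x, hx, hmax⟩ := exists_max_image G card (nonempty_iff_ne_empty.2 hne)
  -- A simplex of maximal size has empty link, so its sphere is its boundary.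
  have hlink : link G x = ∅ := by
    refine eq_empty_iff_forall_notMem.2 fun z hz => ?_
    obtain ⟨hz, hzx, hzxG⟩ := mem_link.1 hz
    have := card_union_of_disjoint hzx
    have := hmax _ hzxG
    have := card_pos.2 (nonempty_iff_ne_empty.2 (hC.ne_empty hz))
    omega
  have hdim := (hS x hx).sup_card
  rw [sphereOf_eq_join hC hx, hlink, join_empty_right (isComplex_simplexBoundary x).empty_notMem,
    sup_card_simplexBoundary] at hdim
  have hx1 := card_pos.2 (nonempty_iff_ne_empty.2 (hC.ne_empty hx))
  have hsup : G.sup card = x.card := le_antisymm (Finset.sup_le hmax) (le_sup hx)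
  obtain ⟨n, rfl⟩ : ∃ n : ℕ, q = n := ⟨q.toNat, by omega⟩
  exact .step n G hC (by rw [dimC, hsup]; omega) hS

end Varieties

section Joins

variable {α : Type*} [DecidableEq α]

/-- `hbd` is the boundary half of the simultaneous induction with `isDSVariety_simplexBoundary`. -/
theorem isDSVariety_join_of_le {n : ℕ}
    (hbd : ∀ x : Finset α, x ≠ ∅ → x.card ≤ n → IsDSVariety (x.card - 2) (simplexBoundary x))
    {p r : ℤ} {A B : Finset (Finset α)} {s : Finset α} (hn : p + r + 2 ≤ n)
    (hA : IsDSVariety p A) (hB : IsDSVariety r B) (hAs : ∀ a ∈ A, a ⊆ s)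
    (hBs : ∀ b ∈ B, Disjoint b s) : IsDSVariety (p + r + 1) (join A B) := by
  rcases eq_or_ne A ∅ with rfl | hA0
  · rw [join_empty_left hB.isComplex.empty_notMem, hA.eq_neg_one]
    simpa using hB
  rcases eq_or_ne B ∅ with rfl | hB0
  · rw [join_empty_right hA.isComplex.empty_notMem, hB.eq_neg_one]
    simpa using hA
  have hp := hA.nonneg hA0
  have hr := hB.nonneg hB0
  have hJ := isComplex_join hA.isComplex hB.isComplex
  have hJ0 : join A B ≠ ∅ := by
    obtain ⟨a, ha⟩ := nonempty_iff_ne_empty.2 hA0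
    refine ne_empty_of_mem (a := a) (mem_join.2 ⟨hA.isComplex.ne_empty ha, a, mem_insert_of_mem ha,
      ∅, mem_insert_self _ _, union_empty a⟩)
  refine .of_sphereOf hJ hJ0 fun c hc => ?_
  obtain ⟨hc0, hcA, hcB⟩ := (mem_join_of_separated hAs hBs).1 hc
  have hcard := card_inter_add_card_sdiff c s
  have hc1 := card_pos.2 (nonempty_iff_ne_empty.2 hc0)
  have hcA1 := hA.card_le hcA
  have hcB1 := hB.card_le hcB
  have hlink : IsDSVariety (p + r + 1 - c.card) (link (join A B) c) := by
    rw [link_join hAs hBs hc]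
    have := isDSVariety_join_of_le hbd (by omega) (isDSVariety_link hA hcA)
      (isDSVariety_link hB hcB) (s := s) (fun a ha => hAs a (mem_link.1 ha).1)
      (fun b hb => hBs b (mem_link.1 hb).1)
    convert this using 1
    omega
  rw [sphereOf_eq_join hJ hc]
  have := isDSVariety_join_of_le hbd (by omega) (hbd c hc0 (by omega)) hlink (s := c)
    (fun a ha => (mem_simplexBoundary.1 ha).2.subset) (fun b hb => (mem_link.1 hb).2.1)
  convert this using 1
  omega
termination_by (p + r + 3).toNat
decreasing_by all_goals omega

theorem isDSVariety_simplexBoundary {x : Finset α} (hx : x ≠ ∅) :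
    IsDSVariety (x.card - 2) (simplexBoundary x) := by
  have hx1 := card_pos.2 (nonempty_iff_ne_empty.2 hx)
  rcases eq_or_ne (simplexBoundary x) ∅ with h | h
  · have hsup := sup_card_simplexBoundary x
    rw [h, sup_empty, Nat.bot_eq_zero] at hsup
    rw [h, show (x.card : ℤ) - 2 = -1 by omega]
    exact .empty
  refine .of_sphereOf (isComplex_simplexBoundary x) h fun y hy => ?_
  obtain ⟨hy0, hyx⟩ := mem_simplexBoundary.1 hy
  have hxy0 : x \ y ≠ ∅ := by simpa [sdiff_eq_empty_iff_subset] using not_subset_of_ssubset hyx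
  have hcard := card_sdiff_add_card_eq_card hyx.subset
  have hy1 := card_pos.2 (nonempty_iff_ne_empty.2 hy0)
  have hxy1 := card_pos.2 (nonempty_iff_ne_empty.2 hxy0)
  rw [sphereOf_eq_join (isComplex_simplexBoundary x) hy, link_simplexBoundary hy]
  have := isDSVariety_join_of_le (n := x.card - 1)
    (fun z hz _ => isDSVariety_simplexBoundary hz) (by omega)
    (isDSVariety_simplexBoundary hy0) (isDSVariety_simplexBoundary hxy0)
    (s := y) (fun a ha => (mem_simplexBoundary.1 ha).2.subset)
    (fun b hb => disjoint_sdiff_self_left.mono_left (mem_simplexBoundary.1 hb).2.subset)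
  convert this using 1
  omega
termination_by x.card
decreasing_by all_goals omega

theorem isDSVariety_join {p r : ℤ} {A B : Finset (Finset α)} {s : Finset α}
    (hA : IsDSVariety p A) (hB : IsDSVariety r B) (hAs : ∀ a ∈ A, a ⊆ s)
    (hBs : ∀ b ∈ B, Disjoint b s) : IsDSVariety (p + r + 1) (join A B) :=
  isDSVariety_join_of_le (n := (p + r + 2).toNat) (fun _ hx _ => isDSVariety_simplexBoundary hx)
    (Int.self_le_toNat _) hA hB hAs hBs

theorem IsDSVariety.of_link {q : ℤ} {G : Finset (Finset α)} (hC : IsComplex G) (hne : G ≠ ∅)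
    (hlk : ∀ x ∈ G, IsDSVariety (q - x.card) (link G x)) : IsDSVariety q G := by
  refine .of_sphereOf hC hne fun x hx => ?_
  rw [sphereOf_eq_join hC hx]
  convert isDSVariety_join (isDSVariety_simplexBoundary (hC.ne_empty hx)) (hlk x hx) (s := x)
    (fun a ha => (mem_simplexBoundary.1 ha).2.subset) (fun b hb => (mem_link.1 hb).2.1) using 1
  ring

end Joins

section Chains

variable {α : Type*} [DecidableEq α]

theorem mem_chainComplex {W c : Finset (Finset α)} :
    c ∈ chainComplex W ↔ c ⊆ W ∧ c ≠ ∅ ∧ ∀ x ∈ c, ∀ y ∈ c, x ⊆ y ∨ y ⊆ x := by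
  simp [chainComplex]

theorem mem_insert_empty_chainComplex {W c : Finset (Finset α)} :
    c ∈ insert ∅ (chainComplex W) ↔ c ⊆ W ∧ ∀ x ∈ c, ∀ y ∈ c, x ⊆ y ∨ y ⊆ x := by
  rw [mem_insert, mem_chainComplex]
  rcases eq_or_ne c ∅ with rfl | hc <;> simp [*]

theorem subset_of_mem_chainComplex {W c : Finset (Finset α)} (hc : c ∈ chainComplex W) : c ⊆ W :=
  (mem_chainComplex.1 hc).1

theorem isComplex_chainComplex (W : Finset (Finset α)) : IsComplex (chainComplex W) := by
  intro c hc
  obtain ⟨hcW, hc0, hch⟩ := mem_chainComplex.1 hc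
  exact ⟨hc0, fun d hdc hd0 => mem_chainComplex.2
    ⟨hdc.trans hcW, hd0, fun x hx y hy => hch x (hdc hx) y (hdc hy)⟩⟩

theorem chainComplex_empty : chainComplex (∅ : Finset (Finset α)) = ∅ := by
  ext c
  simp only [mem_chainComplex, subset_empty, notMem_empty, iff_false]
  tauto

theorem chainComplex_ne_empty {W : Finset (Finset α)} (hW : W ≠ ∅) : chainComplex W ≠ ∅ := by
  obtain ⟨x, hx⟩ := nonempty_iff_ne_empty.2 hW
  refine ne_empty_of_mem (a := {x}) (mem_chainComplex.2 ⟨singleton_subset_iff.2 hx,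
    singleton_ne_empty x, ?_⟩)
  simp

theorem exists_forall_subset_of_mem_chainComplex {W c : Finset (Finset α)}
    (hc : c ∈ chainComplex W) : ∃ x ∈ c, ∀ y ∈ c, x ⊆ y := by
  obtain ⟨-, hc0, hch⟩ := mem_chainComplex.1 hc
  obtain ⟨x, hx, hmin⟩ := exists_min_image c card (nonempty_iff_ne_empty.2 hc0)
  exact ⟨x, hx, fun y hy => (hch x hx y hy).elim id fun hyx =>
    (eq_of_subset_of_card_le hyx (hmin y hy)).superset⟩

def comparables (W c : Finset (Finset α)) : Finset (Finset α) :=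
  W.filter fun y => y ∉ c ∧ ∀ x ∈ c, x ⊆ y ∨ y ⊆ x

theorem link_chainComplex {W c : Finset (Finset α)} (hc : c ∈ insert ∅ (chainComplex W)) :
    link (chainComplex W) c = chainComplex (comparables W c) := by
  obtain ⟨hcW, hch⟩ := mem_insert_empty_chainComplex.1 hc
  ext z
  simp only [mem_link, mem_chainComplex, comparables, subset_iff, mem_filter, mem_union,
    disjoint_left]
  constructor
  · rintro ⟨⟨hzW, hz0, hzch⟩, hzc, -, -, hzcch⟩
    exact ⟨fun y hy => ⟨hzW hy, hzc hy, fun x hx => hzcch x (Or.inr hx) y (Or.inl hy)⟩,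
      hz0, hzch⟩
  · rintro ⟨hzW, hz0, hzch⟩
    refine ⟨⟨fun y hy => (hzW hy).1, hz0, hzch⟩, fun y hy => (hzW hy).2.1,
      fun y hy => hy.elim (fun hy => (hzW hy).1) fun hy => hcW hy,
      fun h => hz0 (union_eq_empty.1 h).1, ?_⟩
    rintro x (hx | hx) y (hy | hy)
    · exact hzch x hx y hy
    · exact ((hzW hx).2.2 y hy).symm
    · exact (hzW hy).2.2 x hx
    · exact hch x hx y hy

theorem disjoint_of_mem_chainComplex {L U c : Finset (Finset α)}
    (hLU : ∀ y ∈ L, ∀ y' ∈ U, y ⊂ y') (hc : c ∈ chainComplex U) : Disjoint c L :=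
  disjoint_left.2 fun y hyc hyL => (hLU y hyL y (subset_of_mem_chainComplex hc hyc)).ne rfl

theorem chainComplex_union {L U : Finset (Finset α)} (hLU : ∀ y ∈ L, ∀ y' ∈ U, y ⊂ y') :
    chainComplex (L ∪ U) = join (chainComplex L) (chainComplex U) := by
  ext z
  rw [mem_join_of_separated (fun _ => subset_of_mem_chainComplex)
    (fun _ => disjoint_of_mem_chainComplex hLU),
    mem_insert_empty_chainComplex, mem_insert_empty_chainComplex, mem_chainComplex]
  simp only [subset_iff, mem_union, mem_inter, mem_sdiff]
  constructor
  · rintro ⟨hzW, hz0, hzch⟩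
    exact ⟨hz0, ⟨fun _ hy => hy.2, fun x hx y hy => hzch x hx.1 y hy.1⟩,
      fun y hy => (hzW hy.1).resolve_left hy.2, fun x hx y hy => hzch x hx.1 y hy.1⟩
  · rintro ⟨hz0, ⟨-, hLch⟩, hzU, hUch⟩
    refine ⟨fun y hy => (em (y ∈ L)).imp_right fun hyL => hzU ⟨hy, hyL⟩, hz0, fun x hx y hy => ?_⟩
    by_cases hxL : x ∈ L <;> by_cases hyL : y ∈ L
    · exact hLch x ⟨hx, hxL⟩ y ⟨hy, hyL⟩
    · exact Or.inl (hLU x hxL y (hzU ⟨hy, hyL⟩)).subset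
    · exact Or.inr (hLU y hyL x (hzU ⟨hx, hxL⟩)).subset
    · exact hUch x ⟨hx, hxL⟩ y ⟨hy, hyL⟩

theorem chainComplex_image {β : Type*} [DecidableEq β] {f : Finset α → Finset β}
    {W : Finset (Finset α)} (hf : ∀ w ∈ W, ∀ w' ∈ W, f w ⊆ f w' ↔ w ⊆ w') :
    chainComplex (W.image f) = (chainComplex W).image (image f) := by
  ext c'
  rw [mem_chainComplex, subset_image_iff, mem_image]
  constructor
  · rintro ⟨⟨c, hcW, rfl⟩, hc0, hch⟩
    refine ⟨c, mem_chainComplex.2 ⟨hcW, fun h => hc0 (by rw [h, image_empty]), fun x hx y hy => ?_⟩,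
      rfl⟩
    rw [← hf x (hcW hx) y (hcW hy), ← hf y (hcW hy) x (hcW hx)]
    exact hch _ (mem_image_of_mem f hx) _ (mem_image_of_mem f hy)
  · rintro ⟨c, hc, rfl⟩
    obtain ⟨hcW, hc0, hch⟩ := mem_chainComplex.1 hc
    refine ⟨⟨c, hcW, rfl⟩, fun h => hc0 (image_eq_empty.1 h), ?_⟩
    simp only [mem_image]
    rintro _ ⟨x, hx, rfl⟩ _ ⟨y, hy, rfl⟩
    rw [hf x (hcW hx) y (hcW hy), hf y (hcW hy) x (hcW hx)]
    exact hch x hx y hy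

end Chains

section Transport

variable {α β : Type*} [DecidableEq α] [DecidableEq β]

theorem isDSVariety_image {q : ℤ} {G : Finset (Finset α)} {f : α → β} {V : Finset α}
    (hf : Set.InjOn f V) (hG : IsDSVariety q G) (hGV : ∀ x ∈ G, x ⊆ V) :
    IsDSVariety q (G.image (image f)) := by
  induction hG with
  | empty => simpa using IsDSVariety.empty
  | step q G hC hq hS ih =>
    have hmem : ∀ {x}, x ⊆ V → (x.image f ∈ G.image (image f) ↔ x ∈ G) := fun hx =>
      ⟨fun h => by
        obtain ⟨y, hy, hyx⟩ := mem_image.1 h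
        rwa [← (image_eq_image_iff_of_injOn hf (hGV y hy) hx).1 hyx], mem_image_of_mem _⟩
    have hC' : IsComplex (G.image (image f)) := by
      intro x' hx'
      obtain ⟨x, hx, rfl⟩ := mem_image.1 hx'
      refine ⟨fun h => hC.ne_empty hx (image_eq_empty.1 h), fun y' hy' hy0 => ?_⟩
      obtain ⟨y, hyx, rfl⟩ := subset_image_iff.1 hy'
      exact mem_image_of_mem _ (hC.mem_of_subset hx hyx fun h => hy0 (by rw [h, image_empty]))
    refine .step q _ hC' ?_ fun x' hx' => ?_
    · rw [dimC, sup_image, ← hq, dimC]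
      congr 2
      exact sup_congr rfl fun x hx => card_image_of_injOn (hf.mono (coe_subset.2 (hGV x hx)))
    obtain ⟨x, hx, rfl⟩ := mem_image.1 hx'
    have hsph : sphereOf (G.image (image f)) (x.image f) = (sphereOf G x).image (image f) := by
      ext z'
      rw [hC'.mem_sphereOf]
      constructor
      · rintro ⟨hz', hzx', hxz'⟩
        obtain ⟨z, hz, rfl⟩ := mem_image.1 hz'
        rw [← image_union, hmem (union_subset (hGV z hz) (hGV x hx))] at hzx'
        rw [image_subset_image_iff_of_injOn hf (hGV x hx) (hGV z hz)] at hxz'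
        exact mem_image_of_mem _ (hC.mem_sphereOf.2 ⟨hz, hzx', hxz'⟩)
      · intro hz'
        obtain ⟨z, hz, rfl⟩ := mem_image.1 hz'
        obtain ⟨hz, hzx, hxz⟩ := hC.mem_sphereOf.1 hz
        rw [← image_union, hmem (union_subset (hGV z hz) (hGV x hx)),
          image_subset_image_iff_of_injOn hf (hGV x hx) (hGV z hz)]
        exact ⟨mem_image_of_mem _ hz, hzx, hxz⟩
    rw [hsph]
    exact ih x hx fun z hz => hGV z (hC.mem_sphereOf.1 hz).1

end Transport

section Stars

variable {α : Type*} [DecidableEq α]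

theorem starOf_erase_eq_image_link {G : Finset (Finset α)} (hG : IsComplex G) (x : Finset α) :
    (starOf G x).erase x = (link G x).image (· ∪ x) := by
  ext y
  simp only [starOf, mem_erase, mem_filter, mem_image, mem_link]
  constructor
  · rintro ⟨hyx, hy, hxy⟩
    have hyx0 : y \ x ≠ ∅ := fun h => hyx (subset_antisymm (sdiff_eq_empty_iff_subset.1 h) hxy)
    refine ⟨y \ x, ⟨hG.mem_of_subset hy sdiff_subset hyx0, sdiff_disjoint, ?_⟩, ?_⟩
    · rwa [sdiff_union_of_subset hxy]
    · exact sdiff_union_of_subset hxy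
  · rintro ⟨z, ⟨hz, hzx, hzxG⟩, rfl⟩
    refine ⟨fun h => hG.ne_empty hz ?_, hzxG, subset_union_right⟩
    rw [← disjoint_self_iff_empty]
    exact hzx.mono_right (union_eq_right.1 h)

theorem isDSVariety_chainComplex_starOf_erase {p : ℤ} {G : Finset (Finset α)} (hG : IsComplex G)
    {x : Finset α} (hlink : IsDSVariety p (chainComplex (link G x))) :
    IsDSVariety p (chainComplex ((starOf G x).erase x)) := by
  have hf : ∀ w ∈ link G x, ∀ w' ∈ link G x, w ∪ x ⊆ w' ∪ x ↔ w ⊆ w' := by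
    intro w hw w' hw'
    refine ⟨fun h a ha => (mem_union.1 (h (mem_union_left x ha))).resolve_right
      (disjoint_left.1 (mem_link.1 hw).2.1 ha), union_subset_union_left⟩
  have hinj : Set.InjOn (· ∪ x) (link G x : Set (Finset α)) := fun w hw w' hw' h =>
    subset_antisymm ((hf w hw w' hw').1 h.le) ((hf w' hw' w hw).1 h.ge)
  rw [starOf_erase_eq_image_link hG, chainComplex_image hf]
  exact isDSVariety_image hinj hlink fun c hc => subset_of_mem_chainComplex hc

end Stars

section LevelSets

variable {α : Type*} {k : ℕ} {g : α → Fin (k + 1)}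

theorem image_eq_univ_of_subset {x y : Finset α} (hxy : x ⊆ y) (hx : x.image g = univ) :
    y.image g = univ :=
  eq_univ_of_forall fun i => image_subset_image hxy (hx ▸ mem_univ i)

variable [DecidableEq α]

theorem levelSet_zero {G : Finset (Finset α)} (hG : IsComplex G) (g : α → Fin 1) :
    levelSet G 0 g = G := by
  ext x
  simp only [levelSet, mem_filter, and_iff_left_iff_imp]
  intro hx
  obtain ⟨a, ha⟩ := nonempty_iff_ne_empty.2 (hG.ne_empty hx)
  exact eq_univ_of_forall fun i => mem_image.2 ⟨a, ha, Subsingleton.elim (α := Fin 1) _ _⟩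

theorem card_eq_of_levelSet_simplexBoundary_eq_empty {x : Finset α} (hx : x.image g = univ)
    (h : levelSet (simplexBoundary x) k g = ∅) : x.card = k + 1 := by
  have hle : k + 1 ≤ x.card := by simpa [hx] using card_image_le (s := x) (f := g)
  refine hle.antisymm' (not_lt.1 fun hlt => ?_)
  obtain ⟨u, hu, w, hw, huw, hg⟩ := exists_ne_map_eq_of_card_lt_of_maps_to
    (t := univ) (by simpa using hlt) (fun a _ => mem_coe.2 (mem_univ (g a)))
  have hw' : w ∈ x.erase u := mem_erase.2 ⟨huw.symm, hw⟩
  have hfull : (x.erase u).image g = univ := eq_univ_of_forall fun i => by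
    obtain ⟨a, ha, rfl⟩ := mem_image.1 (hx ▸ mem_univ i)
    rcases eq_or_ne a u with rfl | hau
    · exact hg ▸ mem_image_of_mem g hw'
    · exact mem_image_of_mem g (mem_erase.2 ⟨hau, ha⟩)
  have hmem : x.erase u ∈ levelSet (simplexBoundary x) k g :=
    mem_filter.2 ⟨mem_simplexBoundary.2 ⟨ne_empty_of_mem hw', erase_ssubset hu⟩, hfull⟩
  simp [h] at hmem

theorem comparables_levelSet {G c : Finset (Finset α)} {x : Finset α} (hG : IsComplex G)
    (hc : c ⊆ levelSet G k g) (hx : x ∈ c) (hxc : ∀ y ∈ c, x ⊆ y) :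
    comparables (levelSet G k g) c =
      levelSet (simplexBoundary x) k g ∪ comparables ((starOf G x).erase x) (c.erase x) := by
  obtain ⟨hxG, hxg⟩ := mem_filter.1 (hc hx)
  ext y
  simp only [comparables, levelSet, starOf, mem_union, mem_filter, mem_erase,
    mem_simplexBoundary]
  constructor
  · rintro ⟨⟨hy, hyg⟩, hyc, hcomp⟩
    have hyx : y ≠ x := fun h => hyc (h ▸ hx)
    refine (hcomp x hx).symm.imp (fun hyx' => ⟨⟨hG.ne_empty hy, ssubset_of_subset_of_ne hyx' hyx⟩,
      hyg⟩) fun hxy => ⟨⟨hyx, hy, hxy⟩, fun h => hyc h.2, fun z hz => hcomp z hz.2⟩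
  · rintro (⟨⟨hy0, hyx⟩, hyg⟩ | ⟨⟨hyx, hy, hxy⟩, hyc, hcomp⟩)
    · exact ⟨⟨hG.mem_of_subset hxG hyx.subset hy0, hyg⟩,
        fun h => not_subset_of_ssubset hyx (hxc y h),
        fun z hz => Or.inr (hyx.subset.trans (hxc z hz))⟩
    · refine ⟨⟨hy, image_eq_univ_of_subset hxy hxg⟩, fun h => hyc ⟨hyx, h⟩, fun z hz => ?_⟩
      rcases eq_or_ne z x with rfl | hzx
      · exact Or.inl hxy
      · exact hcomp z ⟨hzx, hz⟩

end LevelSets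

section Main

variable {α : Type*} [DecidableEq α]

theorem isDSVariety_link_chainComplex_levelSet {q : ℤ} {G c : Finset (Finset α)} {x : Finset α}
    {k : ℕ} {g : α → Fin (k + 1)} (hG : IsDSVariety q G)
    (hc : c ∈ chainComplex (levelSet G k g)) (hx : x ∈ c) (hxc : ∀ y ∈ c, x ⊆ y)
    (hbd : IsDSVariety (x.card - 2 - k) (chainComplex (levelSet (simplexBoundary x) k g)))
    (hlink : IsDSVariety (q - x.card) (chainComplex (link G x))) :
    IsDSVariety (q - k - c.card) (link (chainComplex (levelSet G k g)) c) := by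
  have hC := hG.isComplex
  have hcW := subset_of_mem_chainComplex hc
  set L := levelSet (simplexBoundary x) k g
  set U := comparables ((starOf G x).erase x) (c.erase x)
  have hc' : c.erase x ∈ insert ∅ (chainComplex ((starOf G x).erase x)) := by
    refine mem_insert_empty_chainComplex.2 ⟨fun y hy => ?_, fun y hy z hz =>
      (mem_chainComplex.1 hc).2.2 y (mem_of_mem_erase hy) z (mem_of_mem_erase hz)⟩
    obtain ⟨hyx, hy⟩ := mem_erase.1 hy
    exact mem_erase.2 ⟨hyx, mem_filter.2 ⟨(mem_filter.1 (hcW hy)).1, hxc y hy⟩⟩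
  have hU : IsDSVariety (q - x.card - (c.erase x).card) (chainComplex U) := by
    rw [← link_chainComplex hc']
    exact isDSVariety_link (isDSVariety_chainComplex_starOf_erase hC hlink) hc'
  have hLU : ∀ y ∈ L, ∀ y' ∈ U, y ⊂ y' := fun y hy y' hy' =>
    (mem_simplexBoundary.1 (mem_filter.1 hy).1).2.trans_subset
      (mem_filter.1 (mem_erase.1 (mem_filter.1 hy').1).2).2
  rw [link_chainComplex (mem_insert_of_mem hc), comparables_levelSet hC hcW hx hxc,
    chainComplex_union hLU]
  convert isDSVariety_join hbd hU (s := L) (fun _ => subset_of_mem_chainComplex)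
    (fun _ => disjoint_of_mem_chainComplex hLU) using 1
  rw [card_erase_of_mem hx, Nat.cast_sub (card_pos.2 ⟨x, hx⟩)]
  ring

theorem isDSVariety_chainComplex_levelSet {q : ℤ} {G : Finset (Finset α)} (hG : IsDSVariety q G)
    {k : ℕ} {g : α → Fin (k + 1)} (hne : levelSet G k g ≠ ∅) :
    IsDSVariety (q - k) (chainComplex (levelSet G k g)) := by
  have hC := hG.isComplex
  refine .of_link (isComplex_chainComplex _) (chainComplex_ne_empty hne) fun c hc => ?_
  obtain ⟨x, hx, hxc⟩ := exists_forall_subset_of_mem_chainComplex hc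
  obtain ⟨hxG, hxg⟩ := mem_filter.1 (subset_of_mem_chainComplex hc hx)
  have hx1 := card_pos.2 (nonempty_iff_ne_empty.2 (hC.ne_empty hxG))
  have hxq := hG.card_le (mem_insert_of_mem hxG)
  refine isDSVariety_link_chainComplex_levelSet hG hc hx hxc ?_ ?_
  · rcases eq_or_ne (levelSet (simplexBoundary x) k g) ∅ with hL | hL
    · rw [hL, chainComplex_empty, card_eq_of_levelSet_simplexBoundary_eq_empty hxg hL]
      rw [show ((k + 1 : ℕ) : ℤ) - 2 - k = -1 by push_cast; ring]
      exact .empty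
    have hbd := isDSVariety_simplexBoundary (hC.ne_empty hxG)
    have := hbd.nonneg fun h => hL (by rw [levelSet, h, filter_empty])
    exact isDSVariety_chainComplex_levelSet hbd hL
  · have hlk := isDSVariety_link hG (mem_insert_of_mem hxG)
    rcases eq_or_ne (link G x) ∅ with h | h
    · rw [h] at hlk
      rw [h, chainComplex_empty, hlk.eq_neg_one]
      exact .empty
    have := hlk.nonneg h
    have hlk0 := levelSet_zero hlk.isComplex fun _ => 0
    have := isDSVariety_chainComplex_levelSet hlk (g := fun _ => 0) (by rwa [hlk0])
    rwa [hlk0, Nat.cast_zero, sub_zero] at this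
termination_by q.toNat
decreasing_by all_goals omega

end Main

theorem levelSet_isDSVariety_general {α : Type*} [DecidableEq α]
    (q : ℤ) (k : ℕ) (G : Finset (Finset α))
    (hG : IsDSVariety q G) (g : α → Fin (k + 1))
    (hne : levelSet G k g ≠ ∅) :
    IsDSVariety (q - k) (chainComplex (levelSet G k g)) :=
  isDSVariety_chainComplex_levelSet hG hne

/-- If G is a Dehn-Sommerville q-variety, k ≥ 1 and
g : V(G) → {0,…,k}, then the nonempty level set G_g (viewed as the Whitney
complex of its comparability graph) is a Dehn-Sommerville (q−k)-variety. -/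
theorem levelSet_isDSVariety {α : Type*} [DecidableEq α]
    (q : ℤ) (k : ℕ) (hk : 1 ≤ k) (G : Finset (Finset α))
    (hG : IsDSVariety q G) (g : α → Fin (k + 1))
    (hne : levelSet G k g ≠ ∅) :
    IsDSVariety (q - k) (chainComplex (levelSet G k g)) :=
  levelSet_isDSVariety_general q k G hG g hne
end

section
/- Let G be a finite abstract simplicial complex of maximal dimension q and let X = (X_0,…,X_q) ∈ ℝ^{q+1}. For each vertex v of G define the curvature K(v) = Σ_{k=0}^{q} X_k · f_{k−1}(S(v))/(k+1), with the convention f_{−1}(S(v)) = 1. Then Σ_{v vertex of G} K(v) = Σ_{k=0}^{q} X_k f_k(G) (Gauss–Bonnet theorem for valuations). -/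
open Finset

/-- f_k(G): the number of k-dimensional simplices of G. -/
def fCount {α : Type*} (G : Finset (Finset α)) (k : ℕ) : ℕ :=
  (G.filter fun x => x.card = k + 1).card

/-- The curvature of the valuation with coefficients X at a vertex v:
K(v) = Σ_{k=0}^{q} X_k · f_{k−1}(S(v))/(k+1), with f_{−1} = 1. -/
noncomputable def curvVal {α : Type*} [DecidableEq α] (G : Finset (Finset α))
    (q : ℕ) (X : ℕ → ℝ) (v : α) : ℝ :=
  ∑ k ∈ Finset.range (q + 1),
    X k * (if k = 0 then 1 else (fCount (sphereOf G {v}) (k - 1) : ℝ)) / (k + 1)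

/-!
Double counting: summing over the vertices `v` the number of `k`-simplices in the star of `v`
counts every `k`-simplex once for each of its `k + 1` vertices. For `k ≥ 1`, the `k`-simplices
containing `v` correspond to the `(k - 1)`-simplices of the unit sphere `S(v)` via `x ↦ x \ {v}`,
and for `k = 0` the convention `f₋₁(S(v)) = 1` counts the vertex `{v}` itself. Hence the `k`-th
term of `∑ᵥ K(v)` is `X_k (k + 1) f_k(G) / (k + 1)`.
-/

section

variable {α : Type*} [DecidableEq α] {G : Finset (Finset α)}

lemma fCount_starOf_singleton_zero {v : α} (hv : ({v} : Finset α) ∈ G) :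
    fCount (starOf G {v}) 0 = 1 := by
  rw [fCount, card_eq_one]
  refine ⟨{v}, eq_singleton_iff_unique_mem.mpr ⟨by simp [starOf, hv], ?_⟩⟩
  simp only [starOf, mem_filter, and_imp]
  intro x _ hvx hx
  exact (eq_of_subset_of_card_le hvx (by simp [hx])).symm

lemma sum_fCount_starOf_singleton (k : ℕ) :
    ∑ v ∈ vertexSet G, fCount (starOf G {v}) k = (k + 1) * fCount G k := by
  have hstar : ∀ v, fCount (starOf G {v}) k
      = #((G.filter fun x => x.card = k + 1).bipartiteAbove (· ∈ ·) v) := fun v => by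
    simp only [fCount, starOf, bipartiteAbove, filter_filter, singleton_subset_iff, and_comm]
  have hbelow : ∀ x ∈ G.filter fun x => x.card = k + 1,
      #((vertexSet G).bipartiteBelow (· ∈ ·) x) = k + 1 := by
    intro x hx
    obtain ⟨hxG, hcard⟩ := mem_filter.mp hx
    have hsub : x ⊆ vertexSet G := le_sup (f := id) hxG
    rw [bipartiteBelow, filter_mem_eq_inter, inter_eq_right.mpr hsub, hcard]
  simp only [hstar]
  rw [sum_card_bipartiteAbove_eq_sum_card_bipartiteBelow, sum_congr rfl hbelow, sum_const,
    smul_eq_mul, fCount, mul_comm]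

lemma IsComplex.singleton_mem_of_mem_vertexSet (hC : IsComplex G) {v : α}
    (hv : v ∈ vertexSet G) : ({v} : Finset α) ∈ G := by
  obtain ⟨x, hx, hvx⟩ := Finset.mem_sup.mp hv
  exact (hC x hx).2 {v} (singleton_subset_iff.mpr hvx) (singleton_ne_empty v)

lemma IsComplex.mem_sphereOf_singleton (hC : IsComplex G) {v : α} {z : Finset α} :
    z ∈ sphereOf G {v} ↔ z ∈ G ∧ v ∉ z ∧ insert v z ∈ G := by
  simp only [sphereOf, starOf, ballOf, mem_sdiff, mem_filter, singleton_subset_iff]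
  constructor
  · rintro ⟨⟨hz, y, hy, hvy, hzy⟩, hvz⟩
    exact ⟨hz, fun h => hvz ⟨hz, h⟩,
      (hC y hy).2 _ (insert_subset hvy hzy) (insert_ne_empty _ _)⟩
  · rintro ⟨hz, hvz, hins⟩
    exact ⟨⟨hz, insert v z, hins, mem_insert_self _ _, subset_insert _ _⟩, fun h => hvz h.2⟩

lemma IsComplex.fCount_sphereOf_singleton (hC : IsComplex G) (v : α) (m : ℕ) :
    fCount (sphereOf G {v}) m = fCount (starOf G {v}) (m + 1) := by
  refine card_bij (fun z _ => insert v z) ?_ ?_ ?_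
  · intro z hz
    obtain ⟨⟨-, hvz, hins⟩, hcard⟩ := (mem_filter.mp hz).imp_left (mem_sphereOf_singleton hC).mp
    simp only [starOf, mem_filter, singleton_subset_iff]
    exact ⟨⟨hins, mem_insert_self _ _⟩, by rw [card_insert_of_notMem hvz, hcard]⟩
  · intro z₁ hz₁ z₂ hz₂ heq
    have hv₁ := ((mem_sphereOf_singleton hC).mp (mem_filter.mp hz₁).1).2.1
    have hv₂ := ((mem_sphereOf_singleton hC).mp (mem_filter.mp hz₂).1).2.1
    rw [← erase_insert hv₁, ← erase_insert hv₂, heq]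
  · intro x hx
    simp only [starOf, mem_filter, singleton_subset_iff] at hx
    obtain ⟨⟨hxG, hvx⟩, hcard⟩ := hx
    have hcard' : (x.erase v).card = m + 1 := by rw [card_erase_of_mem hvx, hcard]; rfl
    have hne : x.erase v ≠ ∅ := nonempty_iff_ne_empty.mp (card_pos.mp (by omega))
    have hxv : insert v (x.erase v) = x := insert_erase hvx
    refine ⟨x.erase v, mem_filter.mpr ⟨(mem_sphereOf_singleton hC).mpr
      ⟨(hC x hxG).2 _ (erase_subset _ _) hne, notMem_erase _ _, by rwa [hxv]⟩, hcard'⟩, hxv⟩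

lemma IsComplex.sum_curvature_term (hC : IsComplex G) (k : ℕ) :
    ∑ v ∈ vertexSet G, (if k = 0 then 1 else (fCount (sphereOf G {v}) (k - 1) : ℝ))
      = (k + 1) * fCount G k := by
  have hterm : ∀ v ∈ vertexSet G, (if k = 0 then 1 else (fCount (sphereOf G {v}) (k - 1) : ℝ))
      = fCount (starOf G {v}) k := by
    intro v hv
    rcases k with _ | m
    · simp [fCount_starOf_singleton_zero (hC.singleton_mem_of_mem_vertexSet hv)]
    · simp [hC.fCount_sphereOf_singleton]
  rw [sum_congr rfl hterm, ← Nat.cast_sum, sum_fCount_starOf_singleton]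
  push_cast
  ring

end

theorem gaussBonnet_valuation_general {α : Type*} [DecidableEq α]
    (G : Finset (Finset α)) (q : ℕ) (hC : IsComplex G)
    (X : ℕ → ℝ) :
    ∑ v ∈ vertexSet G, curvVal G q X v
      = ∑ k ∈ Finset.range (q + 1), X k * (fCount G k : ℝ) := by
  simp only [curvVal]
  rw [sum_comm]
  refine sum_congr rfl fun k _ => ?_
  simp only [mul_div_assoc, ← mul_sum, ← sum_div, hC.sum_curvature_term]
  field_simp

/-- Gauss–Bonnet theorem for valuations:
Σ_{v vertex of G} K(v) = Σ_{k=0}^{q} X_k f_k(G). -/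
theorem gaussBonnet_valuation {α : Type*} [DecidableEq α]
    (G : Finset (Finset α)) (q : ℕ) (hC : IsComplex G) (hdim : dimC G = q)
    (X : ℕ → ℝ) :
    ∑ v ∈ vertexSet G, curvVal G q X v
      = ∑ k ∈ Finset.range (q + 1), X k * (fCount G k : ℝ) :=
  gaussBonnet_valuation_general G q hC X
end

section
/- For every finite abstract simplicial complex G, the derivative of the simplex generating function satisfies f_G′(t) = Σ_{v vertex of G} f_{S(v)}(t) as polynomials in t; equivalently, f_G(t) = 1 + Σ_{v vertex of G} F_{S(v)}(t), where F_H(t) = ∫_0^t f_H(s) ds (functional Gauss–Bonnet formula). -/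
open Finset

/-- The simplex generating function f_G(t) = 1 + Σ_{k=0}^q f_k(G) t^{k+1}
    = 1 + Σ_{x ∈ G} t^{|x|}. -/
noncomputable def genPoly {α : Type*} (G : Finset (Finset α)) : Polynomial ℝ :=
  1 + ∑ x ∈ G, (Polynomial.X : Polynomial ℝ) ^ x.card


/-!
Differentiating `1 + ∑_{x ∈ G} t^{|x|}` gives `∑_{x ∈ G} |x| t^{|x|-1} = ∑_{x ∈ G} ∑_{v ∈ x} t^{|x|-1}`.
Exchanging the sums groups the simplices by the star `U(v)` of each vertex `v`, and
`U(v)` is `{v}` together with the cone `{v} ∪ z` over the simplices `z` of the unit sphere `S(v)`.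
Since `|{v} ∪ z| - 1 = |z|`, the star of `v` contributes exactly `f_{S(v)}(t)`.
-/

namespace IsComplex

variable {α : Type*} [DecidableEq α] {G : Finset (Finset α)}

theorem mem_vertexSet_iff (hC : IsComplex G) {v : α} : v ∈ vertexSet G ↔ {v} ∈ G := by
  simp only [vertexSet, mem_sup, id]
  refine ⟨fun ⟨x, hx, hvx⟩ => (hC x hx).2 {v} (singleton_subset_iff.2 hvx) (singleton_ne_empty v),
    fun hv => ⟨{v}, hv, mem_singleton_self v⟩⟩

theorem mem_sphereOf_singleton_iff (hC : IsComplex G) {v : α} {z : Finset α} :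
    z ∈ sphereOf G {v} ↔ z ∈ G ∧ v ∉ z ∧ insert v z ∈ G := by
  simp only [sphereOf, ballOf, starOf, mem_sdiff, mem_filter, singleton_subset_iff, not_and]
  constructor
  · rintro ⟨⟨hz, y, hy, hvy, hzy⟩, hvz⟩
    exact ⟨hz, hvz hz, (hC y hy).2 _ (insert_subset hvy hzy) (insert_ne_empty v z)⟩
  · rintro ⟨hz, hvz, hvzG⟩
    exact ⟨⟨hz, insert v z, hvzG, mem_insert_self v z, subset_insert v z⟩, fun _ => hvz⟩

theorem starOf_singleton_eq (hC : IsComplex G) {v : α} (hv : {v} ∈ G) :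
    starOf G {v} = insert {v} ((sphereOf G {v}).image (insert v)) := by
  ext x
  simp only [starOf, mem_filter, singleton_subset_iff, mem_insert, mem_image,
    hC.mem_sphereOf_singleton_iff]
  constructor
  · rintro ⟨hx, hvx⟩
    by_cases hxv : x = {v}
    · exact Or.inl hxv
    refine Or.inr ⟨x.erase v, ⟨?_, notMem_erase v x, by rwa [insert_erase hvx]⟩, insert_erase hvx⟩
    refine (hC x hx).2 _ (erase_subset v x) fun h => hxv ?_
    rw [← insert_erase hvx, h, insert_empty]
  · rintro (rfl | ⟨z, ⟨-, -, hvzG⟩, rfl⟩)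
    · exact ⟨hv, mem_singleton_self v⟩
    · exact ⟨hvzG, mem_insert_self v z⟩

theorem sum_starOf_singleton (hC : IsComplex G) {v : α} (hv : {v} ∈ G) :
    ∑ x ∈ starOf G {v}, (Polynomial.X : Polynomial ℝ) ^ (x.card - 1) = genPoly (sphereOf G {v}) := by
  have hnotMem : {v} ∉ (sphereOf G {v}).image (insert v) := by
    rintro h
    obtain ⟨z, hz, hzv⟩ := mem_image.1 h
    obtain ⟨hzG, hvz, -⟩ := hC.mem_sphereOf_singleton_iff.1 hz
    exact (hC z hzG).1 (by rw [← erase_insert hvz, hzv, erase_singleton])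
  have hinj : Set.InjOn (insert v) (sphereOf G {v} : Set (Finset α)) := fun z hz z' hz' h => by
    rw [← erase_insert (hC.mem_sphereOf_singleton_iff.1 hz).2.1, h,
      erase_insert (hC.mem_sphereOf_singleton_iff.1 hz').2.1]
  rw [hC.starOf_singleton_eq hv, sum_insert hnotMem, sum_image hinj, genPoly]
  refine congrArg₂ _ (by rw [card_singleton, Nat.sub_self, pow_zero]) (sum_congr rfl fun z hz => ?_)
  rw [card_insert_of_notMem (hC.mem_sphereOf_singleton_iff.1 hz).2.1, Nat.add_sub_cancel]

end IsComplex

theorem derivative_genPoly_eq_sum_vertexSet {α : Type*} [DecidableEq α] (G : Finset (Finset α)) :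
    Polynomial.derivative (genPoly G)
      = ∑ v ∈ vertexSet G, ∑ x ∈ starOf G {v}, (Polynomial.X : Polynomial ℝ) ^ (x.card - 1) := by
  have hswap : ∀ (x : Finset α) (v : α), x ∈ G ∧ v ∈ x ↔ x ∈ starOf G {v} ∧ v ∈ vertexSet G := by
    intro x v
    simp only [starOf, mem_filter, singleton_subset_iff, vertexSet, mem_sup, id]
    exact ⟨fun h => ⟨h, x, h⟩, fun h => h.1⟩
  rw [← sum_comm' hswap, genPoly, map_add, map_sum, Polynomial.derivative_one, zero_add]
  refine sum_congr rfl fun x _ => ?_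
  rw [Polynomial.derivative_X_pow, sum_const, nsmul_eq_mul, Polynomial.C_eq_natCast]

/-- functional Gauss–Bonnet: for every simplicial complex G,
f_G′(t) = Σ_{v vertex of G} f_{S(v)}(t). -/
theorem functional_gaussBonnet {α : Type*} [DecidableEq α]
    (G : Finset (Finset α)) (hC : IsComplex G) :
    Polynomial.derivative (genPoly G)
      = ∑ v ∈ vertexSet G, genPoly (sphereOf G {v}) := by
  rw [derivative_genPoly_eq_sum_vertexSet]
  exact sum_congr rfl fun v hv => hC.sum_starOf_singleton (hC.mem_vertexSet_iff.1 hv)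
end
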